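/- arXiv:1104.1481 — 5 statements merged into one kernel-verified Lean document; each statement's English description precedes it below -/
import Mathlib

section
/- Let q ≥ 2, 0 ≤ k ≤ n and max(0, 2k−n) ≤ l ≤ k. Then the eigenvalues of the matrix M(k, n+l−k, n) are exactly the n+l−2k+1 distinct real numbers qj − (q−1)l for j = k, k+1, …, n+l−k (each with multiplicity one). -/
open Polynomial Matrix Finset

lemma sum_ite_coe {s : ℕ} (a : ℕ) (g : Fin s → ℝ) :
    (∑ y : Fin s, if (y : ℕ) = a then g y else 0) =
      if h : a < s then g ⟨a, h⟩ else 0 := by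
  split_ifs with h
  · rw [Finset.sum_eq_single (⟨a, h⟩ : Fin s)]
    · simp
    · intro y _ hy
      rw [if_neg]
      intro hay
      exact hy (Fin.ext hay)
    · simp
  · apply Finset.sum_eq_zero
    intro y _
    rw [if_neg]
    intro hay
    exact h (hay ▸ y.isLt)

lemma charpoly_conj_aux {s : ℕ} (V W U : Matrix (Fin s) (Fin s) ℝ)
    (hVW : V * W = 1) : (V * U * W).charpoly = U.charpoly := by
  have h1 : V.map (C : ℝ → ℝ[X]) * W.map C = 1 := by
    rw [← Matrix.map_mul (f := (C : ℝ →+* ℝ[X])), hVW]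
    exact Matrix.map_one _ (map_zero _) (map_one _)
  have hcomm : ∀ (B : Matrix (Fin s) (Fin s) ℝ[X]),
      B * Matrix.scalar (Fin s) (X : ℝ[X]) = Matrix.scalar (Fin s) X * B := by
    intro B
    exact (Matrix.scalar_commute (X : ℝ[X]) (fun r => Commute.all _ _) B).symm
  have key : V.map (C : ℝ → ℝ[X]) * Matrix.charmatrix U * W.map C
      = Matrix.charmatrix (V * U * W) := by
    rw [Matrix.charmatrix, Matrix.charmatrix, RingHom.mapMatrix_apply,
      RingHom.mapMatrix_apply, Matrix.mul_sub, Matrix.sub_mul]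
    congr 1
    · calc V.map (C : ℝ → ℝ[X]) * Matrix.scalar (Fin s) X * W.map C
          = Matrix.scalar (Fin s) X * (V.map C * W.map C) := by
            rw [hcomm (V.map C), Matrix.mul_assoc]
      _ = Matrix.scalar (Fin s) X := by rw [h1, mul_one]
    · rw [Matrix.map_mul (f := (C : ℝ →+* ℝ[X])), Matrix.map_mul (f := (C : ℝ →+* ℝ[X]))]
  rw [Matrix.charpoly, Matrix.charpoly, ← key, Matrix.det_mul, Matrix.det_mul,
    mul_right_comm, ← Matrix.det_mul, h1, Matrix.det_one, one_mul]

noncomputable def Pd (E c1 : ℝ) (m d : ℕ) : ℝ[X] :=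
  C c1 * X ^ d + C (1 - E) * X ^ (d + 1) - X * (X - 1) ^ d
    - C (E * m) * (X + 1) ^ d + C E * (X * (X + 1) ^ d)

lemma coeff_Xmul (p : ℝ[X]) (i : ℕ) :
    (X * p).coeff i = if i = 0 then 0 else p.coeff (i - 1) := by
  cases i with
  | zero => simp
  | succ n => simp [Polynomial.coeff_X_mul]

lemma coeff_Xsub1 (d i : ℕ) :
    ((X - 1 : ℝ[X]) ^ d).coeff i = (-1) ^ (d - i) * d.choose i := by
  have h : (X - 1 : ℝ[X]) = X + C (-1) := by
    rw [map_neg, C_1]; ring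
  rw [h, coeff_X_add_C_pow]

lemma coeff_Pd (E c1 : ℝ) (m d i : ℕ) :
    (Pd E c1 m d).coeff i =
      c1 * (if i = d then 1 else 0) + (1 - E) * (if i = d + 1 then 1 else 0)
      - (if i = 0 then 0 else (-1 : ℝ) ^ (d - (i - 1)) * d.choose (i - 1))
      - E * m * (d.choose i)
      + E * (if i = 0 then 0 else (d.choose (i - 1) : ℝ)) := by
  unfold Pd
  rw [coeff_add, coeff_sub, coeff_sub, coeff_add,
    coeff_C_mul, coeff_C_mul, coeff_C_mul, coeff_C_mul, coeff_X_pow, coeff_X_pow,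
    coeff_Xmul, coeff_Xmul, coeff_Xsub1, coeff_X_add_one_pow, coeff_X_add_one_pow]

lemma coeff_Pd_eq_zero (E c1 : ℝ) (m d i : ℕ) (hi : d < i) :
    (Pd E c1 m d).coeff i = 0 := by
  have hi0 : i ≠ 0 := by omega
  have hid : ¬ (i = d) := by omega
  have hch : d.choose i = 0 := Nat.choose_eq_zero_of_lt hi
  rw [coeff_Pd, if_neg hid, if_neg hi0, if_neg hi0, hch]
  rcases Nat.lt_or_ge (d + 1) i with h | h
  · have hch2 : d.choose (i - 1) = 0 := Nat.choose_eq_zero_of_lt (by omega)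
    rw [if_neg (by omega), hch2]
    push_cast
    ring
  · have hi1 : i = d + 1 := by omega
    subst hi1
    rw [if_pos rfl]
    have : d + 1 - 1 = d := by omega
    rw [this, Nat.sub_self, Nat.choose_self]
    push_cast
    ring

lemma coeff_Pd_self (E c1 : ℝ) (m d : ℕ) :
    (Pd E c1 m d).coeff d = c1 + d + E * d - E * m := by
  rw [coeff_Pd, if_pos rfl, if_neg (by omega), Nat.choose_self]
  cases d with
  | zero => norm_num
  | succ e =>
    rw [if_neg (by omega), if_neg (by omega)]
    have h1 : e + 1 - 1 = e := by omega
    have h2 : e + 1 - e = 1 := by omega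
    rw [h1, h2, Nat.choose_succ_self_right]
    push_cast
    ring

lemma natDegree_Pd_le (E c1 : ℝ) (m d : ℕ) (hdm : d ≤ m) :
    (Pd E c1 m d).natDegree ≤ m := by
  apply Polynomial.natDegree_le_iff_coeff_eq_zero.mpr
  intro i hi
  exact coeff_Pd_eq_zero _ _ _ _ _ (lt_of_le_of_lt hdm hi)

lemma eval_Pd (E c1 : ℝ) (m d : ℕ) (x : ℝ) :
    (Pd E c1 m d).eval x = (c1 + (1 - E) * x) * x ^ d - x * (x - 1) ^ d
      - E * ((m : ℝ) - x) * (x + 1) ^ d := by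
  simp [Pd]; ring

lemma sqrt_helper (E : ℝ) (hE : 0 < E) (m a : ℕ) (ha : a < m) :
    (-Real.sqrt (E * (a + 1) * ((m : ℝ) - a))) * Real.sqrt (E ^ (a + 1) * (m.choose (a + 1)))
      = Real.sqrt (E ^ a * (m.choose a)) * (-(E * ((m : ℝ) - a))) ∧
    (-Real.sqrt (E * (a + 1) * ((m : ℝ) - a))) * Real.sqrt (E ^ a * (m.choose a))
      = Real.sqrt (E ^ (a + 1) * (m.choose (a + 1))) * (-((a : ℝ) + 1)) := by
  have hma : (0 : ℝ) ≤ (m : ℝ) - a := by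
    have := (Nat.cast_le (α := ℝ)).mpr ha.le; linarith
  have hch : ((m.choose (a + 1)) : ℝ) * ((a : ℝ) + 1)
      = ((m.choose a) : ℝ) * ((m : ℝ) - (a : ℝ)) := by
    have h := congrArg (fun t : ℕ => (t : ℝ)) (Nat.choose_succ_right_eq m a)
    push_cast [Nat.cast_sub ha.le] at h
    linarith
  have h0 : (0:ℝ) ≤ E * (a+1) * ((m:ℝ) - a) := by positivity
  have h1 : (0:ℝ) ≤ E ^ (a+1) * (m.choose (a+1)) := by positivity
  have h2 : (0:ℝ) ≤ E ^ a * (m.choose a) := by positivity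
  constructor
  · have key : E * (a+1) * ((m:ℝ) - a) * (E ^ (a+1) * (m.choose (a+1)))
        = (E ^ a * (m.choose a)) * (E * ((m:ℝ) - a)) ^ 2 := by
      linear_combination (E ^ a * E ^ 2 * ((m:ℝ) - a)) * hch
    rw [neg_mul, ← Real.sqrt_mul h0, key, Real.sqrt_mul h2,
      Real.sqrt_sq (by positivity)]
    ring
  · have key : E * (a+1) * ((m:ℝ) - a) * (E ^ a * (m.choose a))
        = (E ^ (a+1) * (m.choose (a+1))) * ((a : ℝ) + 1) ^ 2 := by
      linear_combination (-(E ^ a * E * ((a:ℝ) + 1))) * hch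
    rw [neg_mul, ← Real.sqrt_mul h0, key, Real.sqrt_mul h1,
      Real.sqrt_sq (by positivity)]
    ring


lemma charpoly_A (E c1 : ℝ) (m : ℕ) :
    (Matrix.of fun x y : Fin (m + 1) =>
      (if (y : ℕ) = (x : ℕ) then c1 + (1 - E) * ((x : ℕ) : ℝ) else 0)
      + (if (y : ℕ) = (x : ℕ) + 1 then -(E * ((m : ℝ) - ((x : ℕ) : ℝ))) else 0)
      + (if (y : ℕ) + 1 = (x : ℕ) then -(((x : ℕ) : ℝ)) else 0)).charpoly
    = ∏ d : Fin (m + 1), (X - C (c1 + (d : ℕ) + E * (d : ℕ) - E * m)) := by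
  classical
  set A : Matrix (Fin (m + 1)) (Fin (m + 1)) ℝ := Matrix.of fun x y : Fin (m + 1) =>
      (if (y : ℕ) = (x : ℕ) then c1 + (1 - E) * ((x : ℕ) : ℝ) else 0)
      + (if (y : ℕ) = (x : ℕ) + 1 then -(E * ((m : ℝ) - ((x : ℕ) : ℝ))) else 0)
      + (if (y : ℕ) + 1 = (x : ℕ) then -(((x : ℕ) : ℝ)) else 0) with hA
  set U : Matrix (Fin (m + 1)) (Fin (m + 1)) ℝ :=
    Matrix.of (fun i j : Fin (m + 1) => (Pd E c1 m (j : ℕ)).coeff (i : ℕ)) with hU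
  set V : Matrix (Fin (m + 1)) (Fin (m + 1)) ℝ :=
    Matrix.vandermonde (fun x : Fin (m + 1) => ((x : ℕ) : ℝ)) with hV
  have hdetV : IsUnit V.det := by
    rw [hV, Matrix.det_vandermonde, isUnit_iff_ne_zero]
    apply Finset.prod_ne_zero_iff.mpr
    intro i _
    apply Finset.prod_ne_zero_iff.mpr
    intro j hj
    have h1 : i < j := Finset.mem_Ioi.mp hj
    have h2 : ((i : ℕ) : ℝ) < ((j : ℕ) : ℝ) := by
      exact_mod_cast (Fin.lt_iff_val_lt_val.mp h1)
    exact sub_ne_zero_of_ne (ne_of_gt h2)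
  have hAV : A * V = V * U := by
    ext x d
    rw [Matrix.mul_apply, Matrix.mul_apply]
    have hR : ∑ i : Fin (m + 1), V x i * U i d = (Pd E c1 m (d : ℕ)).eval ((x : ℕ) : ℝ) := by
      rw [Polynomial.eval_eq_sum_range'
        (Nat.lt_succ_of_le (natDegree_Pd_le E c1 m (d : ℕ) (Nat.lt_succ_iff.mp d.isLt))),
        ← Fin.sum_univ_eq_sum_range]
      apply Finset.sum_congr rfl
      intro i _
      rw [hV, hU]
      simp only [Matrix.vandermonde_apply, Matrix.of_apply]
      ring
    have hL : ∑ y : Fin (m + 1), A x y * V y d = (Pd E c1 m (d : ℕ)).eval ((x : ℕ) : ℝ) := by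
      rw [eval_Pd]
      have expand : ∀ y : Fin (m + 1), A x y * V y d =
          (if (y : ℕ) = (x : ℕ) then (c1 + (1 - E) * ((x : ℕ) : ℝ)) * ((y : ℕ) : ℝ) ^ (d : ℕ) else 0)
          + (if (y : ℕ) = (x : ℕ) + 1 then -(E * ((m : ℝ) - ((x : ℕ) : ℝ))) * ((y : ℕ) : ℝ) ^ (d : ℕ) else 0)
          + (if (y : ℕ) + 1 = (x : ℕ) then -(((x : ℕ) : ℝ)) * ((y : ℕ) : ℝ) ^ (d : ℕ) else 0) := by
        intro y
        rw [hA, hV, Matrix.of_apply, Matrix.vandermonde_apply]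
        split_ifs <;> ring
      rw [Finset.sum_congr rfl (fun y _ => expand y), Finset.sum_add_distrib,
        Finset.sum_add_distrib, sum_ite_coe, sum_ite_coe]
      rcases x with ⟨xv, hxv⟩
      simp only []
      have h3 : (∑ y : Fin (m + 1),
          if (y : ℕ) + 1 = xv then -((xv : ℝ)) * ((y : ℕ) : ℝ) ^ (d : ℕ) else 0)
          = -((xv : ℝ)) * (((xv : ℝ)) - 1) ^ (d : ℕ) := by
        cases xv with
        | zero =>
          rw [Finset.sum_eq_zero (fun y _ => if_neg (by omega))]
          norm_num
        | succ b =>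
          simp only [Nat.add_right_cancel_iff]
          rw [sum_ite_coe, dif_pos (by omega : b < m + 1)]
          push_cast
          ring_nf
      rw [h3, dif_pos hxv]
      rcases Nat.lt_or_ge xv m with hxm | hxm
      · rw [dif_pos (by omega : xv + 1 < m + 1)]
        push_cast
        ring_nf
      · have hxm' : xv = m := by omega
        subst hxm'
        rw [dif_neg (by omega)]
        ring_nf
    rw [hL, hR]
  have hVV : V * V⁻¹ = 1 := Matrix.mul_nonsing_inv V hdetV
  have hAconj : A = V * U * V⁻¹ := by
    calc A = A * (V * V⁻¹) := by rw [hVV, Matrix.mul_one]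
    _ = A * V * V⁻¹ := by rw [Matrix.mul_assoc]
    _ = V * U * V⁻¹ := by rw [hAV]
  have htri : U.BlockTriangular id := by
    intro i j hij
    show (Pd E c1 m (j : ℕ)).coeff (i : ℕ) = 0
    exact coeff_Pd_eq_zero E c1 m _ _ hij
  rw [hAconj, charpoly_conj_aux _ _ _ hVV, Matrix.charpoly_of_upperTriangular _ htri]
  apply Finset.prod_congr rfl
  intro d _
  rw [show U d d = (Pd E c1 m (d : ℕ)).coeff (d : ℕ) from rfl, coeff_Pd_self]

/-- The entry in position `(i, j)` of the tridiagonal matrix `M(k, top, n)` of the paper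
(with rows and columns indexed by `{k, k+1, …, top}`, where `top = n + l - k`):
diagonal entry `j + (q-1)(n-j)`, off-diagonal entry
`-√((q-1)(j-k)(top-j+1))` in position `(j-1, j)` (and symmetrically), and `0` elsewhere. -/
noncomputable def Ment (q n k top : ℕ) (i j : ℕ) : ℝ :=
  if i = j then ((j + (q - 1) * (n - j) : ℕ) : ℝ)
  else if i + 1 = j then -Real.sqrt (((q - 1) * (j - k) * (top + 1 - j) : ℕ))
  else if j + 1 = i then -Real.sqrt (((q - 1) * (i - k) * (top + 1 - i) : ℕ))
  else 0

/-- The eigenvalues of `M(k, n+l-k, n)` are exactly the `n+l-2k+1` distinct real numbers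
`qj - (q-1)l`, `j = k, …, n+l-k`, each with multiplicity one: equivalently, its
characteristic polynomial is `∏_{j=k}^{n+l-k} (X - (qj - (q-1)l))`. -/
theorem eigenvalues_M (q n k l : ℕ) (hq : 2 ≤ q) (hk : k ≤ n) (hl1 : 2 * k - n ≤ l)
    (hl2 : l ≤ k) :
    (Matrix.of fun i j : Fin (n + l - 2 * k + 1) =>
        Ment q n k (n + l - k) (k + (i : ℕ)) (k + (j : ℕ))).charpoly =
      ∏ j ∈ Finset.Icc k (n + l - k),
        (Polynomial.X - Polynomial.C ((q * j - (q - 1) * l : ℕ) : ℝ)) := by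
  classical
  set m := n + l - 2 * k with hm
  have h2k : 2 * k ≤ n + l := by omega
  have htop : n + l - k = k + m := by omega
  have hkm : k + m ≤ n := by omega
  have hq2 : (2 : ℝ) ≤ (q : ℝ) := by exact_mod_cast hq
  set E : ℝ := (q : ℝ) - 1 with hE
  have hEpos : (0 : ℝ) < E := by rw [hE]; linarith
  set c1 : ℝ := (k : ℝ) + E * ((n : ℝ) - (k : ℝ)) with hc1
  set A : Matrix (Fin (m + 1)) (Fin (m + 1)) ℝ := Matrix.of fun x y : Fin (m + 1) =>
      (if (y : ℕ) = (x : ℕ) then c1 + (1 - E) * ((x : ℕ) : ℝ) else 0)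
      + (if (y : ℕ) = (x : ℕ) + 1 then -(E * ((m : ℝ) - ((x : ℕ) : ℝ))) else 0)
      + (if (y : ℕ) + 1 = (x : ℕ) then -(((x : ℕ) : ℝ)) else 0) with hA
  set δ : Fin (m + 1) → ℝ := fun a => Real.sqrt (E ^ (a : ℕ) * (m.choose (a : ℕ))) with hδ
  have hδpos : ∀ a : Fin (m + 1), 0 < δ a := by
    intro a
    simp only [hδ]
    apply Real.sqrt_pos.mpr
    apply mul_pos (pow_pos hEpos _)
    exact_mod_cast Nat.choose_pos (Nat.lt_succ_iff.mp a.isLt)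
  have hDD : Matrix.diagonal δ * Matrix.diagonal (fun a => (δ a)⁻¹) = 1 := by
    rw [Matrix.diagonal_mul_diagonal]
    have h : (fun a => δ a * (δ a)⁻¹) = fun _ => (1 : ℝ) :=
      funext fun a => mul_inv_cancel₀ (hδpos a).ne'
    rw [h, Matrix.diagonal_one]
  have hMA : (Matrix.of fun i j : Fin (m + 1) =>
        Ment q n k (n + l - k) (k + (i : ℕ)) (k + (j : ℕ))) * Matrix.diagonal δ
      = Matrix.diagonal δ * A := by
    ext x y
    rw [Matrix.mul_diagonal, Matrix.diagonal_mul, Matrix.of_apply, hA, Matrix.of_apply]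
    have hxm : (x : ℕ) ≤ m := Nat.lt_succ_iff.mp x.isLt
    have hym : (y : ℕ) ≤ m := Nat.lt_succ_iff.mp y.isLt
    rcases eq_or_ne (y : ℕ) (x : ℕ) with hxy | hxy
    · have hxy' : x = y := Fin.ext hxy.symm
      subst hxy'
      rw [if_pos rfl, if_neg (by omega), if_neg (by omega)]
      simp only [Ment]
      rw [if_pos trivial]
      have hkxn : k + (x : ℕ) ≤ n := by omega
      simp only [hδ]
      rw [add_zero, add_zero]
      push_cast [Nat.cast_sub hkxn, Nat.cast_sub (show 1 ≤ q by omega)]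
      rw [hc1, hE]
      ring
    · rcases eq_or_ne (y : ℕ) ((x : ℕ) + 1) with hxy1 | hxy1
      · rw [if_neg hxy, if_pos hxy1, if_neg (by omega)]
        simp only [Ment]
        rw [if_neg (by omega), if_pos (by omega : k + (x : ℕ) + 1 = k + (y : ℕ))]
        have hxltm : (x : ℕ) < m := by omega
        have A1 : k + (y : ℕ) - k = (x : ℕ) + 1 := by omega
        have A2 : (n + l - k) + 1 - (k + (y : ℕ)) = m - (x : ℕ) := by omega
        rw [A1, A2]
        have ecast : (((q - 1) * ((x : ℕ) + 1) * (m - (x : ℕ)) : ℕ) : ℝ)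
            = E * (((x : ℕ) : ℝ) + 1) * ((m : ℝ) - ((x : ℕ) : ℝ)) := by
          push_cast [Nat.cast_sub hxltm.le, Nat.cast_sub (show 1 ≤ q by omega)]
          rw [hE]
        rw [ecast]
        simp only [hδ, hxy1]
        rw [zero_add, add_zero]
        exact (sqrt_helper E hEpos m (x : ℕ) hxltm).1
      · rcases eq_or_ne ((y : ℕ) + 1) (x : ℕ) with hxy2 | hxy2
        · rw [if_neg hxy, if_neg hxy1, if_pos hxy2]
          simp only [Ment]
          rw [if_neg (by omega), if_neg (by omega),
            if_pos (by omega : k + (y : ℕ) + 1 = k + (x : ℕ))]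
          have hyltm : (y : ℕ) < m := by omega
          have A1 : k + (x : ℕ) - k = (y : ℕ) + 1 := by omega
          have A2 : (n + l - k) + 1 - (k + (x : ℕ)) = m - (y : ℕ) := by omega
          rw [A1, A2]
          have ecast : (((q - 1) * ((y : ℕ) + 1) * (m - (y : ℕ)) : ℕ) : ℝ)
              = E * (((y : ℕ) : ℝ) + 1) * ((m : ℝ) - ((y : ℕ) : ℝ)) := by
            push_cast [Nat.cast_sub hyltm.le, Nat.cast_sub (show 1 ≤ q by omega)]
            rw [hE]
          rw [ecast]
          have hx : (x : ℕ) = (y : ℕ) + 1 := hxy2.symm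
          simp only [hδ, hx]
          rw [zero_add, zero_add]
          have := (sqrt_helper E hEpos m (y : ℕ) hyltm).2
          rw [this]
          push_cast
          ring
        · rw [if_neg hxy, if_neg hxy1, if_neg hxy2]
          simp only [Ment]
          rw [if_neg (by omega), if_neg (by omega), if_neg (by omega)]
          ring
  have hM'conj : (Matrix.of fun i j : Fin (m + 1) =>
        Ment q n k (n + l - k) (k + (i : ℕ)) (k + (j : ℕ)))
      = Matrix.diagonal δ * A * Matrix.diagonal (fun a => (δ a)⁻¹) := by
    calc (Matrix.of fun i j : Fin (m + 1) =>
        Ment q n k (n + l - k) (k + (i : ℕ)) (k + (j : ℕ)))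
        = (Matrix.of fun i j : Fin (m + 1) =>
            Ment q n k (n + l - k) (k + (i : ℕ)) (k + (j : ℕ)))
          * (Matrix.diagonal δ * Matrix.diagonal (fun a => (δ a)⁻¹)) := by
          rw [hDD, Matrix.mul_one]
    _ = ((Matrix.of fun i j : Fin (m + 1) =>
            Ment q n k (n + l - k) (k + (i : ℕ)) (k + (j : ℕ)))
          * Matrix.diagonal δ) * Matrix.diagonal (fun a => (δ a)⁻¹) := by
          rw [Matrix.mul_assoc]
    _ = Matrix.diagonal δ * A * Matrix.diagonal (fun a => (δ a)⁻¹) := by rw [hMA]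
  rw [hM'conj, charpoly_conj_aux _ _ _ hDD, hA, charpoly_A E c1 m]
  rw [htop, show Finset.Icc k (k + m) = Finset.Ico k (k + m + 1) from (Finset.Ico_add_one_right_eq_Icc k (k+m)).symm]
  rw [Finset.prod_Ico_eq_prod_range]
  rw [show k + m + 1 - k = m + 1 by omega]
  rw [← Fin.prod_univ_eq_prod_range
    (fun j => Polynomial.X - Polynomial.C (((q * (k + j) - (q - 1) * l : ℕ)) : ℝ)) (m + 1)]
  apply Finset.prod_congr rfl
  intro d _
  refine congrArg (fun t : ℝ => Polynomial.X - Polynomial.C t) ?_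
  have hle : (q - 1) * l ≤ q * (k + (d : ℕ)) := by
    calc (q - 1) * l ≤ q * l := Nat.mul_le_mul_right _ (by omega)
    _ ≤ q * (k + (d : ℕ)) := Nat.mul_le_mul_left _ (by omega)
  rw [Nat.cast_sub hle]
  push_cast [Nat.cast_sub (show 1 ≤ q by omega)]
  have hn : (n : ℝ) = (m : ℝ) + 2 * (k : ℝ) - (l : ℝ) := by
    have h := congrArg (fun t : ℕ => (t : ℝ)) (show m + 2 * k = n + l by omega)
    push_cast at h
    linarith
  rw [hc1, hE]
  linear_combination ((q : ℝ) - 1) * hn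
end

section
/- Let q ≥ 2, n ≥ 1 and 0 ≤ t ≤ n. Define the vector w_t ∈ ℝ^{B_q(n)} whose coordinate at a vertex of rank k (i.e., an n-tuple with exactly k nonzero entries) equals Σ_{j=0}^{t} (−1)^j · C(k,j) · C(n−k, t−j) · (q−1)^{t−j} (the coefficient of x^t in (1−x)^k (1+(q−1)x)^{n−k}). Then w_t ≠ 0 and L(w_t) = q·t·w_t, where L is the Laplacian of the graph C_q(n); that is, w_t is an eigenvector of the Laplacian of C_q(n) with eigenvalue qt. -/
/-- The support of a `q`-ary `n`-tuple: the set of coordinates where it is nonzero. -/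
def supp {n q : ℕ} (a : Fin n → Fin q) : Finset (Fin n) :=
  Finset.univ.filter (fun i => (a i : ℕ) ≠ 0)

/-- The (one-sided) adjacency relation of the nonbinary hypercube. -/
def cubeAdjRel {n q : ℕ} (a b : Fin n → Fin q) : Prop :=
  (supp a ⊆ supp b ∨ supp b ⊆ supp a) ∧
    ((supp a).card + 1 = (supp b).card ∨ (supp b).card + 1 = (supp a).card) ∧
    ∀ i ∈ supp a ∩ supp b, a i = b i

/-- The nonbinary hypercube `C_q(n)`. -/
def nonbinaryCube (n q : ℕ) : SimpleGraph (Fin n → Fin q) :=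
  SimpleGraph.fromRel cubeAdjRel

open scoped Classical in
/-- The Laplacian `L = D - A` of `C_q(n)`, acting on real-valued functions on the vertex set:
`(L f)(a) = Σ_{b ~ a} (f a - f b)`. -/
noncomputable def lap (q n : ℕ) (f : (Fin n → Fin q) → ℝ) : (Fin n → Fin q) → ℝ :=
  fun a => ∑ b ∈ Finset.univ.filter (fun b => (nonbinaryCube n q).Adj a b), (f a - f b)

/-- The vector `w_t`, whose coordinate at a vertex of rank `k` is the coefficient of `x^t` in
`(1-x)^k (1+(q-1)x)^{n-k}`. -/
noncomputable def wvec (q n t : ℕ) : (Fin n → Fin q) → ℝ := fun a =>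
  ∑ j ∈ Finset.range (t + 1),
    (-1 : ℝ) ^ j * ((supp a).card.choose j : ℕ) *
      (((n - (supp a).card).choose (t - j) : ℕ)) * (((q - 1) ^ (t - j) : ℕ))

namespace CubeAux

open Polynomial Finset

noncomputable def W (q n t k : ℕ) : ℝ :=
  ∑ j ∈ Finset.range (t + 1),
    (-1 : ℝ) ^ j * (k.choose j : ℕ) * (((n - k).choose (t - j) : ℕ)) * (((q - 1) ^ (t - j) : ℕ))

lemma wvec_eq (q n t : ℕ) (a : Fin n → Fin q) : wvec q n t a = W q n t (supp a).card := rfl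

noncomputable def PA : ℝ[X] := 1 + C (-1 : ℝ) * X
noncomputable def PB (q : ℕ) : ℝ[X] := 1 + C ((q : ℝ) - 1) * X

lemma derivA : derivative PA = -1 := by simp [PA]
lemma derivB (q : ℕ) : derivative (PB q) = C ((q : ℝ) - 1) := by simp [PB]

lemma derivBpow (q m : ℕ) :
    PA * PB q * derivative ((PB q) ^ m)
      = (m : ℝ[X]) * C ((q:ℝ) - 1) * (PA * (PB q) ^ m) := by
  induction m with
  | zero => simp
  | succ m ih =>
    rw [pow_succ, derivative_mul, derivB]
    push_cast
    linear_combination (PB q) * ih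

lemma derivABpow (q k m : ℕ) :
    PA * PB q * derivative (PA ^ k * (PB q) ^ m)
      = (m : ℝ[X]) * C ((q:ℝ) - 1) * (PA ^ (k+1) * (PB q) ^ m)
        - (k : ℝ[X]) * (PA ^ k * (PB q) ^ (m+1)) := by
  induction k with
  | zero => simpa using derivBpow q m
  | succ k ih =>
    rw [pow_succ, mul_right_comm (PA ^ k) (PA), derivative_mul, derivA]
    push_cast
    linear_combination PA * ih

lemma hPA_ne : PA ≠ 0 := fun h => by
  simpa [PA, coeff_one] using congrArg (fun p => coeff p 0) h

lemma hPB_ne (q : ℕ) : PB q ≠ 0 := fun h => by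
  simpa [PB, coeff_one] using congrArg (fun p => coeff p 0) h

lemma polykey (q k m : ℕ) (Pd Pu : ℝ[X])
    (hd : (k:ℝ[X]) * (PA * Pd) = (k:ℝ[X]) * (PA ^ k * PB q ^ (m+1)))
    (hu : (m:ℝ[X]) * C ((q:ℝ)-1) * (PB q * Pu)
        = (m:ℝ[X]) * C ((q:ℝ)-1) * (PA ^ (k+1) * PB q ^ m)) :
    ((k:ℝ[X]) + (m:ℝ[X]) * C ((q:ℝ)-1)) * (PA^k * PB q^m)
      = (k:ℝ[X]) * Pd + (m:ℝ[X]) * C ((q:ℝ)-1) * Pu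
        + (q:ℝ[X]) * X * derivative (PA^k * PB q^m) := by
  apply mul_left_cancel₀ (mul_ne_zero hPA_ne (hPB_ne q))
  have hD := derivABpow q k m
  have hC : C ((q:ℝ) - 1) = (q:ℝ[X]) - 1 := by rw [map_sub, map_one, map_natCast]
  simp only [PA, PB, hC, map_neg, map_one] at hD hd hu ⊢
  linear_combination (-((q:ℝ[X]) * X)) * hD + (-(1 + ((q:ℝ[X]) - 1) * X)) * hd
    + (-(1 + (-1) * X)) * hu

lemma coeff_one_add_CX_pow (c : ℝ) (k j : ℕ) :
    ((1 + C c * X) ^ k).coeff j = (k.choose j : ℝ) * c ^ j := by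
  induction k generalizing j with
  | zero => cases j <;> simp [coeff_one]
  | succ k ih =>
    have h : (1 + C c * X) ^ (k + 1)
        = (1 + C c * X) ^ k + C c * ((1 + C c * X) ^ k * X) := by ring
    rw [h, coeff_add, coeff_C_mul]
    cases j with
    | zero => simp [coeff_mul_X_zero, ih]
    | succ j =>
      rw [coeff_mul_X, ih, ih, Nat.choose_succ_succ]
      push_cast
      ring


lemma W_eq_coeff (q n t k : ℕ) (hq : 2 ≤ q) :
    W q n t k
      = ((1 + C (-1 : ℝ) * X) ^ k * (1 + C ((q : ℝ) - 1) * X) ^ (n - k)).coeff t := by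
  rw [Polynomial.coeff_mul, Finset.Nat.sum_antidiagonal_eq_sum_range_succ_mk]
  unfold W
  refine Finset.sum_congr rfl fun j hj => ?_
  rw [coeff_one_add_CX_pow, coeff_one_add_CX_pow]
  have hcast : (((q - 1 : ℕ)) : ℝ) = (q : ℝ) - 1 := by
    push_cast [Nat.cast_sub (by omega : 1 ≤ q)]; ring
  push_cast [hcast]
  ring

lemma W_eq_coeff' (q n t k : ℕ) (hq : 2 ≤ q) :
    W q n t k = (PA ^ k * PB q ^ (n - k)).coeff t := W_eq_coeff q n t k hq

lemma coeff_qX_deriv (p : ℝ[X]) (q t : ℕ) :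
    ((q:ℝ[X]) * X * derivative p).coeff t = (q:ℝ) * t * p.coeff t := by
  have h : (q:ℝ[X]) * X * derivative p = (C ((q:ℕ):ℝ) * derivative p) * X := by
    rw [map_natCast]; ring
  rw [h]
  cases t with
  | zero => simp [coeff_mul_X_zero]
  | succ s => rw [coeff_mul_X, coeff_C_mul, coeff_derivative]; push_cast; ring

lemma eigen_scalar (q n t k : ℕ) (hq : 2 ≤ q) (hk : k ≤ n) :
    ((k : ℝ) + (((n-k) * (q-1) : ℕ) : ℝ)) * W q n t k
      = (k:ℝ) * W q n t (k-1) + (((n-k) * (q-1) : ℕ) : ℝ) * W q n t (k+1)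
        + (q:ℝ) * t * W q n t k := by
  set m := n - k with hm
  have hd : (k:ℝ[X]) * (PA * (PA ^ (k-1) * PB q ^ (m+1)))
      = (k:ℝ[X]) * (PA ^ k * PB q ^ (m+1)) := by
    cases k with
    | zero => simp
    | succ j => rw [Nat.succ_sub_one]; ring
  have hu : (m:ℝ[X]) * C ((q:ℝ)-1) * (PB q * (PA ^ (k+1) * PB q ^ (m-1)))
      = (m:ℝ[X]) * C ((q:ℝ)-1) * (PA ^ (k+1) * PB q ^ m) := by
    cases hm' : m with
    | zero => simp
    | succ j => rw [Nat.succ_sub_one]; ring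
  have h := polykey q k m _ _ hd hu
  rw [show ((k:ℝ[X])) = C ((k:ℕ):ℝ) from (map_natCast C k).symm,
      show ((m:ℝ[X])) = C ((m:ℕ):ℝ) from (map_natCast C m).symm,
      ← map_mul, ← map_add] at h
  have h2 := congrArg (fun p => coeff p t) h
  simp only [coeff_add, coeff_C_mul, coeff_qX_deriv] at h2
  have hWk : W q n t k = (PA ^ k * PB q ^ m).coeff t := W_eq_coeff' q n t k hq
  have hWu : W q n t (k+1) = (PA ^ (k+1) * PB q ^ (m-1)).coeff t := by
    rw [W_eq_coeff' q n t (k+1) hq, show n - (k+1) = m - 1 by omega]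
  have hWd : (k:ℝ) * W q n t (k-1) = (k:ℝ) * (PA ^ (k-1) * PB q ^ (m+1)).coeff t := by
    cases k with
    | zero => simp
    | succ j =>
      rw [W_eq_coeff' q n t (j+1-1) hq, Nat.succ_sub_one,
        show n - j = m + 1 by omega]
  have hcast : (((n-k) * (q-1) : ℕ) : ℝ) = (m:ℝ) * ((q:ℝ) - 1) := by
    rw [← hm]; push_cast [Nat.cast_sub (by omega : 1 ≤ q)]; ring
  rw [hWk, hWu, hcast]
  rw [hWd]
  linarith [h2]
open Finset



variable {n q : ℕ}

lemma mem_supp {a : Fin n → Fin q} {i : Fin n} : i ∈ supp a ↔ (a i : ℕ) ≠ 0 := by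
  simp [supp]

lemma notMem_supp {a : Fin n → Fin q} {i : Fin n} : i ∉ supp a ↔ (a i : ℕ) = 0 := by
  simp [mem_supp]

lemma exists_step {a b : Fin n → Fin q} (h1 : supp a ⊆ supp b)
    (h2 : (supp a).card + 1 = (supp b).card)
    (h3 : ∀ i ∈ supp a ∩ supp b, a i = b i) :
    ∃ i, (∀ j, j ≠ i → a j = b j) ∧ (a i : ℕ) = 0 ∧ (b i : ℕ) ≠ 0 := by
  have hcard : (supp b \ supp a).card = 1 := by
    rw [Finset.card_sdiff_of_subset h1]; omega
  obtain ⟨i, hi⟩ := Finset.card_eq_one.mp hcard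
  have hib : i ∈ supp b ∧ i ∉ supp a := by
    have := Finset.mem_sdiff.mp (hi ▸ Finset.mem_singleton_self i); tauto
  refine ⟨i, ?_, notMem_supp.mp hib.2, mem_supp.mp hib.1⟩
  intro j hj
  by_cases hja : j ∈ supp a
  · exact h3 j (Finset.mem_inter.mpr ⟨hja, h1 hja⟩)
  · have hjb : j ∉ supp b := fun hjb =>
      hj (Finset.mem_singleton.mp (hi ▸ Finset.mem_sdiff.mpr ⟨hjb, hja⟩))
    have h1 := notMem_supp.mp hja
    have h2 := notMem_supp.mp hjb
    exact Fin.ext (by omega)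

lemma of_rel {a b : Fin n → Fin q} (h : cubeAdjRel a b) :
    ∃ i, (∀ j, j ≠ i → a j = b j) ∧
      (((a i : ℕ) = 0 ∧ (b i : ℕ) ≠ 0) ∨ ((b i : ℕ) = 0 ∧ (a i : ℕ) ≠ 0)) := by
  obtain ⟨hsub, hcard, hagree⟩ := h
  rcases hcard with hab | hba
  · have h1 : supp a ⊆ supp b := by
      rcases hsub with h | h
      · exact h
      · have := Finset.card_le_card h; omega
    obtain ⟨i, hji, h0, hb⟩ := exists_step h1 hab hagree
    exact ⟨i, hji, Or.inl ⟨h0, hb⟩⟩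
  · have h1 : supp b ⊆ supp a := by
      rcases hsub with h | h
      · have := Finset.card_le_card h; omega
      · exact h
    have hagree' : ∀ i ∈ supp b ∩ supp a, b i = a i := fun i hi =>
      (hagree i (by rwa [Finset.inter_comm])).symm
    obtain ⟨i, hji, h0, ha⟩ := exists_step h1 hba hagree'
    exact ⟨i, fun j hj => (hji j hj).symm, Or.inr ⟨h0, ha⟩⟩

lemma to_rel {a b : Fin n → Fin q} {i : Fin n} (hji : ∀ j, j ≠ i → a j = b j)
    (h0 : (a i : ℕ) = 0) (hb : (b i : ℕ) ≠ 0) : cubeAdjRel a b ∧ a ≠ b := by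
  have hsub : supp a ⊆ supp b := by
    intro j hj
    have hja := mem_supp.mp hj
    have hjne : j ≠ i := fun h => hja (h ▸ h0)
    exact mem_supp.mpr ((hji j hjne) ▸ hja)
  have hia : i ∉ supp a := notMem_supp.mpr h0
  have hsupp : supp b = insert i (supp a) := by
    ext j
    rw [Finset.mem_insert]
    constructor
    · intro hj
      by_cases hjne : j = i
      · exact Or.inl hjne
      · exact Or.inr (mem_supp.mpr ((hji j hjne) ▸ mem_supp.mp hj))
    · rintro (rfl | hj)
      · exact mem_supp.mpr hb
      · exact hsub hj
  refine ⟨⟨Or.inl hsub, Or.inl ?_, ?_⟩, ?_⟩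
  · rw [hsupp, Finset.card_insert_of_notMem hia]
  · intro j hj
    have hja := Finset.mem_inter.mp hj |>.1
    exact hji j (fun h => hia (h ▸ hja))
  · intro h
    rw [h] at h0
    exact hb h0

lemma adj_iff {a b : Fin n → Fin q} :
    (nonbinaryCube n q).Adj a b ↔
      ∃ i, (∀ j, j ≠ i → a j = b j) ∧
        (((a i : ℕ) = 0 ∧ (b i : ℕ) ≠ 0) ∨ ((b i : ℕ) = 0 ∧ (a i : ℕ) ≠ 0)) := by
  rw [nonbinaryCube, SimpleGraph.fromRel_adj]
  constructor
  · rintro ⟨hne, h | h⟩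
    · exact of_rel h
    · obtain ⟨i, hji, hc⟩ := of_rel h
      exact ⟨i, fun j hj => (hji j hj).symm, hc.symm⟩
  · rintro ⟨i, hji, ⟨h0, hb⟩ | ⟨h0, ha⟩⟩
    · obtain ⟨hrel, hne⟩ := to_rel hji h0 hb
      exact ⟨hne, Or.inl hrel⟩
    · obtain ⟨hrel, hne⟩ := to_rel (fun j hj => (hji j hj).symm) h0 ha
      exact ⟨hne.symm, Or.inr hrel⟩

lemma supp_update_zero (hq : 2 ≤ q) (a : Fin n → Fin q) (i : Fin n) :
    supp (Function.update a i ⟨0, by omega⟩) = (supp a).erase i := by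
  ext j
  rw [Finset.mem_erase, mem_supp, mem_supp]
  by_cases hj : j = i
  · subst hj; simp
  · rw [Function.update_of_ne hj]
    simp [hj]

lemma supp_update_ne (a : Fin n → Fin q) (i : Fin n) (v : Fin q) (hv : (v : ℕ) ≠ 0) :
    supp (Function.update a i v) = insert i (supp a) := by
  ext j
  rw [Finset.mem_insert, mem_supp, mem_supp]
  by_cases hj : j = i
  · subst hj; simp [hv]
  · rw [Function.update_of_ne hj]
    simp [hj]

open scoped Classical in
lemma neighbor_filter (hq : 2 ≤ q) (a : Fin n → Fin q) :
    (univ.filter fun b => (nonbinaryCube n q).Adj a b)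
      = ((supp a).image fun i => Function.update a i ⟨0, by omega⟩)
        ∪ (((supp a)ᶜ ×ˢ (univ.filter fun v : Fin q => (v : ℕ) ≠ 0)).image
            fun p => Function.update a p.1 p.2) := by
  ext b
  simp only [Finset.mem_union, Finset.mem_filter, Finset.mem_image, Finset.mem_product,
    Finset.mem_compl, Finset.mem_univ, true_and, Prod.exists]
  rw [adj_iff]
  constructor
  · rintro ⟨i, hji, ⟨h0, hb⟩ | ⟨h0, ha⟩⟩
    · refine Or.inr ⟨i, b i, ⟨notMem_supp.mpr h0, hb⟩, ?_⟩
      funext j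
      by_cases hj : j = i
      · subst hj; simp
      · rw [Function.update_of_ne hj]; exact hji j hj
    · refine Or.inl ⟨i, mem_supp.mpr ha, ?_⟩
      funext j
      by_cases hj : j = i
      · subst hj; rw [Function.update_self]; exact Fin.ext (by simp [h0])
      · rw [Function.update_of_ne hj]; exact hji j hj
  · rintro (⟨i, hi, rfl⟩ | ⟨i, v, ⟨hi, hv⟩, rfl⟩)
    · refine ⟨i, fun j hj => (Function.update_of_ne hj _ _).symm,
        Or.inr ⟨by simp, mem_supp.mp hi⟩⟩
    · exact ⟨i, fun j hj => (Function.update_of_ne hj _ _).symm,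
        Or.inl ⟨notMem_supp.mp hi, by simp [hv]⟩⟩



lemma card_filter_ne_zero (hq : 2 ≤ q) :
    (univ.filter fun v : Fin q => (v : ℕ) ≠ 0).card = q - 1 := by
  have h : (univ.filter fun v : Fin q => (v : ℕ) ≠ 0) = univ.erase ⟨0, by omega⟩ := by
    ext v
    simp [Finset.mem_erase, Fin.ext_iff]
  rw [h, Finset.card_erase_of_mem (Finset.mem_univ _), Finset.card_univ, Fintype.card_fin]

open scoped Classical in
lemma lap_wvec (q n t : ℕ) (hq : 2 ≤ q) (a : Fin n → Fin q) :
    lap q n (wvec q n t) a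
      = ((supp a).card : ℝ)
            * (W q n t (supp a).card - W q n t ((supp a).card - 1))
        + (((n - (supp a).card) * (q - 1) : ℕ) : ℝ)
            * (W q n t (supp a).card - W q n t ((supp a).card + 1)) := by
  set k := (supp a).card with hk
  have hinjd : ∀ x ∈ supp a, ∀ y ∈ supp a,
      Function.update a x (⟨0, by omega⟩ : Fin q) = Function.update a y ⟨0, by omega⟩
        → x = y := by
    intro x hx y hy heq
    by_contra hne
    have h1 := congrFun heq x
    rw [Function.update_self, Function.update_of_ne hne] at h1
    exact mem_supp.mp hx (by simp [← h1])
  have hinju : ∀ p ∈ (supp a)ᶜ ×ˢ (univ.filter fun v : Fin q => (v : ℕ) ≠ 0),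
      ∀ p' ∈ (supp a)ᶜ ×ˢ (univ.filter fun v : Fin q => (v : ℕ) ≠ 0),
      Function.update a p.1 p.2 = Function.update a p'.1 p'.2 → p = p' := by
    rintro ⟨i, v⟩ hp ⟨i', v'⟩ hp' heq
    dsimp only at heq
    simp only [Finset.mem_product, Finset.mem_compl, Finset.mem_filter,
      Finset.mem_univ, true_and] at hp hp'
    have hii : i = i' := by
      by_contra hne
      have h1 := congrFun heq i
      rw [Function.update_self, Function.update_of_ne hne] at h1
      exact hp.2 (by rw [h1]; exact notMem_supp.mp hp.1)
    subst hii
    have h2 := congrFun heq i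
    rw [Function.update_self, Function.update_self] at h2
    rw [show v = v' from h2]
  have hdisj : Disjoint
      ((supp a).image fun i => Function.update a i (⟨0, by omega⟩ : Fin q))
      ((((supp a)ᶜ) ×ˢ (univ.filter fun v : Fin q => (v : ℕ) ≠ 0)).image
          fun p => Function.update a p.1 p.2) := by
    rw [Finset.disjoint_left]
    rintro b hb hb'
    obtain ⟨i, hi, rfl⟩ := Finset.mem_image.mp hb
    obtain ⟨⟨i', v'⟩, hp, heq⟩ := Finset.mem_image.mp hb'
    simp only [Finset.mem_product, Finset.mem_compl, Finset.mem_filter,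
      Finset.mem_univ, true_and] at hp
    have e1 : (supp (Function.update a i (⟨0, by omega⟩ : Fin q))).card = k - 1 := by
      rw [supp_update_zero hq, Finset.card_erase_of_mem hi]
    have e2 : (supp (Function.update a i' v')).card = k + 1 := by
      rw [supp_update_ne a i' v' hp.2, Finset.card_insert_of_notMem hp.1]
    rw [heq] at e2
    have : 1 ≤ k := Finset.card_pos.mpr ⟨i, hi⟩
    omega
  unfold lap
  rw [neighbor_filter hq a, Finset.sum_union hdisj, Finset.sum_image hinjd,
    Finset.sum_image hinju]
  have hWd : ∀ i ∈ supp a,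
      wvec q n t a - wvec q n t (Function.update a i (⟨0, by omega⟩ : Fin q))
        = W q n t k - W q n t (k - 1) := by
    intro i hi
    rw [wvec_eq, wvec_eq, supp_update_zero hq, Finset.card_erase_of_mem hi, ← hk]
  have hWu : ∀ p ∈ ((supp a)ᶜ) ×ˢ (univ.filter fun v : Fin q => (v : ℕ) ≠ 0),
      wvec q n t a - wvec q n t (Function.update a p.1 p.2)
        = W q n t k - W q n t (k + 1) := by
    rintro ⟨i, v⟩ hp
    simp only [Finset.mem_product, Finset.mem_compl, Finset.mem_filter,
      Finset.mem_univ, true_and] at hp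
    rw [wvec_eq, wvec_eq, supp_update_ne a i v hp.2, Finset.card_insert_of_notMem hp.1, ← hk]
  rw [Finset.sum_congr rfl hWd, Finset.sum_congr rfl hWu, Finset.sum_const, Finset.sum_const,
    Finset.card_product, card_filter_ne_zero hq, Finset.card_compl, Fintype.card_fin, ← hk]
  push_cast
  ring

end CubeAux

theorem wvec_is_laplacian_eigenvector (q n t : ℕ) (hq : 2 ≤ q) (hn : 1 ≤ n) (ht : t ≤ n) :
    wvec q n t ≠ 0 ∧ lap q n (wvec q n t) = fun a => (q : ℝ) * t * wvec q n t a := by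
  constructor
  · intro h
    have h1 := congrFun h (fun _ => (⟨1, by omega⟩ : Fin q))
    have hsupp : supp (fun _ : Fin n => (⟨1, by omega⟩ : Fin q)) = (Finset.univ : Finset (Fin n)) := by
      ext i; simp [supp]
    rw [CubeAux.wvec_eq, hsupp, Finset.card_univ, Fintype.card_fin, Pi.zero_apply] at h1
    have h2 : CubeAux.W q n t n = (-1 : ℝ) ^ t * (n.choose t) := by
      unfold CubeAux.W
      rw [Finset.sum_eq_single t]
      · simp [Nat.sub_self]
      · intro j hj hjne
        have hj' : j < t := by simp at hj; omega
        obtain ⟨s, hs⟩ := Nat.exists_eq_succ_of_ne_zero (show t - j ≠ 0 by omega)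
        rw [Nat.sub_self, hs]
        simp [Nat.choose_zero_succ]
      · intro ht'; simp at ht'
    rw [h2] at h1
    have h3 : ((n.choose t : ℕ) : ℝ) ≠ 0 := Nat.cast_ne_zero.mpr (Nat.choose_pos ht).ne'
    have h4 : ((-1 : ℝ) ^ t) ≠ 0 := pow_ne_zero t (by norm_num)
    exact (mul_ne_zero h4 h3) h1
  · funext a
    have hk : (supp a).card ≤ n := le_trans (Finset.card_le_univ _) (by simp)
    have h1 := CubeAux.lap_wvec q n t hq a
    have h2 := CubeAux.eigen_scalar q n t (supp a).card hq hk
    rw [h1, CubeAux.wvec_eq]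
    push_cast at h2 ⊢
    linarith [h2]
end

section
/- As polynomials in q: (a) for 1 ≤ j ≤ n+1, the degree of F_q(n,0,j) equals Σ_{t=j}^{n} (t−1); and (b) for 1 ≤ k ≤ n/2 and k ≤ j ≤ n−k+1, the degree of F_q(n,k,j) equals Σ_{t=j}^{n−k} max{t−1, n−t−1} (empty sums being 0, corresponding to the constant polynomial 1). -/
open Polynomial

/-- The `q`-integer `[m]_q = 1 + q + ⋯ + q^{m-1}` as a polynomial in `q` over `ℤ`. -/
noncomputable def qIntP (m : ℕ) : Polynomial ℤ :=
  ∑ i ∈ Finset.range m, Polynomial.X ^ i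

/-- Auxiliary descending recursion: `Faux n k d = F_q(n, k, n-k+1-d)`. -/
noncomputable def Faux (n k : ℕ) : ℕ → Polynomial ℤ
  | 0 => 1
  | 1 => qIntP k + qIntP (n - k)
  | (d + 2) =>
      (qIntP (n - k - 1 - d) + qIntP (n - (n - k - 1 - d))) * Faux n k (d + 1) -
        Polynomial.X ^ k * qIntP ((n - k - 1 - d) + 1 - k) *
          qIntP (n - k - (n - k - 1 - d)) * Faux n k d

/-- The polynomial `F_q(n, k, j)` of the paper, defined for `k ≤ j ≤ n-k+1` by:
`F_q(n,k,n-k+1) = 1`, `F_q(n,k,n-k) = [k]_q + [n-k]_q`, and for `k ≤ j < n-k`,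
`F_q(n,k,j) = ([j]_q + [n-j]_q)·F_q(n,k,j+1) - q^k·[j+1-k]_q·[n-k-j]_q·F_q(n,k,j+2)`. -/
noncomputable def FP (n k j : ℕ) : Polynomial ℤ :=
  Faux n k (n - k + 1 - j)

lemma coeff_qIntP (m i : ℕ) : (qIntP m).coeff i = if i < m then 1 else 0 := by
  simp [qIntP, Polynomial.finset_sum_coeff, Polynomial.coeff_X_pow, Finset.sum_ite_eq']

lemma qIntP_ne_zero {m : ℕ} (h : 1 ≤ m) : qIntP m ≠ 0 := by
  intro hz
  have := coeff_qIntP m 0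
  rw [hz] at this
  rw [if_pos (by omega : 0 < m)] at this; simp at this

lemma natDegree_qIntP {m : ℕ} (h : 1 ≤ m) : (qIntP m).natDegree = m - 1 := by
  apply le_antisymm
  · rw [Polynomial.natDegree_le_iff_coeff_eq_zero]
    intro i hi
    rw [coeff_qIntP]
    have : ¬ i < m := by omega
    simp [this]
  · apply Polynomial.le_natDegree_of_ne_zero
    rw [coeff_qIntP]
    have : m - 1 < m := by omega
    simp [this]

lemma natDegree_qIntP_add {a b : ℕ} (ha : 1 ≤ a) (hb : 1 ≤ b) :
    (qIntP a + qIntP b).natDegree = max (a-1) (b-1) ∧ qIntP a + qIntP b ≠ 0 := by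
  have hc : ∀ i, (qIntP a + qIntP b).coeff i
      = (if i < a then (1:ℤ) else 0) + (if i < b then 1 else 0) := by
    intro i; rw [Polynomial.coeff_add, coeff_qIntP, coeff_qIntP]
  have hne : (qIntP a + qIntP b).coeff (max (a-1) (b-1)) ≠ 0 := by
    rw [hc]; split_ifs <;> omega
  constructor
  · apply le_antisymm
    · rw [Polynomial.natDegree_le_iff_coeff_eq_zero]
      intro i hi
      rw [hc]
      split_ifs <;> omega
    · exact Polynomial.le_natDegree_of_ne_zero hne
  · intro hz; rw [hz] at hne; simp at hne

lemma Icc_eq_insert {a b : ℕ} (h : a ≤ b) :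
    Finset.Icc a b = insert a (Finset.Icc (a+1) b) := by
  ext x; simp [Finset.mem_Icc, Finset.mem_insert]; omega

lemma Faux_zero_eq_prod (n : ℕ) :
    ∀ d, d ≤ n → Faux n 0 d = ∏ t ∈ Finset.Icc (n+1-d) n, qIntP t := by
  intro d
  induction d using Nat.strong_induction_on with
  | _ d ih =>
    match d with
    | 0 =>
      intro _
      rw [Finset.Icc_eq_empty (by omega), Finset.prod_empty]
      rfl
    | 1 =>
      intro h
      have h1 : n + 1 - 1 = n := by omega
      rw [h1, Finset.Icc_self, Finset.prod_singleton]
      show qIntP 0 + qIntP (n - 0) = qIntP n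
      simp [qIntP]
    | (d + 2) =>
      intro h
      have e1 : Faux n 0 (d+1) = ∏ t ∈ Finset.Icc (n-d) n, qIntP t := by
        rw [ih (d+1) (by omega) (by omega)]; congr 1; congr 1; omega
      have e0 : Faux n 0 d = ∏ t ∈ Finset.Icc (n+1-d) n, qIntP t := ih d (by omega) (by omega)
      show (qIntP (n - 0 - 1 - d) + qIntP (n - (n - 0 - 1 - d))) * Faux n 0 (d + 1) -
        Polynomial.X ^ 0 * qIntP ((n - 0 - 1 - d) + 1 - 0) *
          qIntP (n - 0 - (n - 0 - 1 - d)) * Faux n 0 d = _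
      have j1 : n - 0 - 1 - d = n - 1 - d := by omega
      have j2 : n - (n - 0 - 1 - d) = d + 1 := by omega
      have j3 : (n - 0 - 1 - d) + 1 - 0 = n - d := by omega
      have j4 : n - 0 - (n - 0 - 1 - d) = d + 1 := by omega
      rw [j2, j3, j4, j1, e1, e0, pow_zero, one_mul]
      have s1 : Finset.Icc (n-d) n = insert (n-d) (Finset.Icc (n+1-d) n) := by
        ext x; simp [Finset.mem_Icc, Finset.mem_insert]; omega
      have s2 : Finset.Icc (n+1-(d+2)) n
          = insert (n-1-d) (insert (n-d) (Finset.Icc (n+1-d) n)) := by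
        ext x; simp [Finset.mem_Icc, Finset.mem_insert]; omega
      rw [s1, s2, Finset.prod_insert (by simp [Finset.mem_Icc]; omega),
        Finset.prod_insert (by simp [Finset.mem_Icc, Finset.mem_insert]; omega),
        Finset.prod_insert (by simp [Finset.mem_Icc]; omega)]
      ring

lemma Faux_k_natDegree (n k : ℕ) (hk : 1 ≤ k) (hkn : 2*k ≤ n) :
    ∀ d, d ≤ n - 2*k + 1 → Faux n k d ≠ 0 ∧
      (Faux n k d).natDegree = ∑ t ∈ Finset.Icc (n-k+1-d) (n-k), max (t-1) (n-t-1) := by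
  intro d
  induction d using Nat.strong_induction_on with
  | _ d ih =>
    match d with
    | 0 =>
      intro _
      rw [Finset.Icc_eq_empty (by omega), Finset.sum_empty]
      exact ⟨one_ne_zero, Polynomial.natDegree_one⟩
    | 1 =>
      intro h
      obtain ⟨hdeg, hne⟩ := natDegree_qIntP_add hk (show 1 ≤ n - k by omega)
      refine ⟨hne, ?_⟩
      rw [show n-k+1-1 = n-k by omega, Finset.Icc_self, Finset.sum_singleton]
      show (qIntP k + qIntP (n-k)).natDegree = _
      rw [hdeg, show n-(n-k)-1 = k-1 by omega]
      exact max_comm _ _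
    | (d + 2) =>
      intro h
      obtain ⟨h1ne, h1d⟩ := ih (d+1) (by omega) (by omega)
      obtain ⟨h0ne, h0d⟩ := ih d (by omega) (by omega)
      obtain ⟨hAdeg, hAne⟩ :=
        natDegree_qIntP_add (show 1 ≤ n-k-1-d by omega) (show 1 ≤ n-(n-k-1-d) by omega)
      have hFdef : Faux n k (d+2) =
          (qIntP (n-k-1-d) + qIntP (n-(n-k-1-d))) * Faux n k (d+1) -
            Polynomial.X ^ k * qIntP ((n-k-1-d)+1-k) *
              qIntP (n-k-(n-k-1-d)) * Faux n k d := rfl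
      have hXne : (Polynomial.X : Polynomial ℤ)^k ≠ 0 := pow_ne_zero _ Polynomial.X_ne_zero
      have hq1ne : qIntP ((n-k-1-d)+1-k) ≠ 0 := qIntP_ne_zero (by omega)
      have hq2ne : qIntP (n-k-(n-k-1-d)) ≠ 0 := qIntP_ne_zero (by omega)
      have hprod1 : ((qIntP (n-k-1-d) + qIntP (n-(n-k-1-d))) * Faux n k (d+1)).natDegree
          = max ((n-k-1-d)-1) (n-(n-k-1-d)-1)
            + ∑ t ∈ Finset.Icc (n-k+1-(d+1)) (n-k), max (t-1) (n-t-1) := by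
        rw [Polynomial.natDegree_mul hAne h1ne, hAdeg, h1d]
      have hprod0 : (Polynomial.X ^ k * qIntP ((n-k-1-d)+1-k) *
            qIntP (n-k-(n-k-1-d)) * Faux n k d).natDegree
          = k + (((n-k-1-d)+1-k)-1) + ((n-k-(n-k-1-d))-1)
            + ∑ t ∈ Finset.Icc (n-k+1-d) (n-k), max (t-1) (n-t-1) := by
        rw [Polynomial.natDegree_mul (mul_ne_zero (mul_ne_zero hXne hq1ne) hq2ne) h0ne,
          Polynomial.natDegree_mul (mul_ne_zero hXne hq1ne) hq2ne,
          Polynomial.natDegree_mul hXne hq1ne, Polynomial.natDegree_X_pow,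
          natDegree_qIntP (by omega), natDegree_qIntP (by omega), h0d]
      have hS1 : ∑ t ∈ Finset.Icc (n-k+1-(d+1)) (n-k), max (t-1) (n-t-1)
          = max ((n-k-d)-1) (n-(n-k-d)-1)
            + ∑ t ∈ Finset.Icc (n-k+1-d) (n-k), max (t-1) (n-t-1) := by
        have : Finset.Icc (n-k+1-(d+1)) (n-k)
            = insert (n-k-d) (Finset.Icc (n-k+1-d) (n-k)) := by
          ext x; simp [Finset.mem_Icc, Finset.mem_insert]; omega
        rw [this, Finset.sum_insert (by simp [Finset.mem_Icc]; omega)]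
      have hb1 : n-(n-k-1-d)-1 ≤ max ((n-k-1-d)-1) (n-(n-k-1-d)-1) := le_max_right _ _
      have hb2 : (n-k-d)-1 ≤ max ((n-k-d)-1) (n-(n-k-d)-1) := le_max_left _ _
      have hlt : (Polynomial.X ^ k * qIntP ((n-k-1-d)+1-k) *
            qIntP (n-k-(n-k-1-d)) * Faux n k d).natDegree
          < ((qIntP (n-k-1-d) + qIntP (n-(n-k-1-d))) * Faux n k (d+1)).natDegree := by
        rw [hprod1, hprod0, hS1]
        omega
      constructor
      · rw [hFdef]
        intro hz
        rw [sub_eq_zero] at hz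
        rw [hz] at hlt
        exact lt_irrefl _ hlt
      · rw [hFdef, Polynomial.natDegree_sub_eq_left_of_natDegree_lt hlt, hprod1, hS1]
        have hIcc : Finset.Icc (n-k+1-(d+2)) (n-k)
            = insert (n-k-1-d) (insert (n-k-d) (Finset.Icc (n-k+1-d) (n-k))) := by
          ext x; simp [Finset.mem_Icc, Finset.mem_insert]; omega
        rw [hIcc, Finset.sum_insert (by simp [Finset.mem_Icc, Finset.mem_insert]; omega),
          Finset.sum_insert (by simp [Finset.mem_Icc]; omega)]

theorem FP_natDegree (n : ℕ) :
    (∀ j : ℕ, 1 ≤ j → j ≤ n + 1 →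
      (FP n 0 j).natDegree = ∑ t ∈ Finset.Icc j n, (t - 1)) ∧
    (∀ k j : ℕ, 1 ≤ k → 2 * k ≤ n → k ≤ j → j ≤ n - k + 1 →
      (FP n k j).natDegree = ∑ t ∈ Finset.Icc j (n - k), max (t - 1) (n - t - 1)) := by
  constructor
  · intro j hj1 hj2
    show (Faux n 0 (n - 0 + 1 - j)).natDegree = _
    rw [show n - 0 + 1 - j = n + 1 - j by omega,
      Faux_zero_eq_prod n (n+1-j) (by omega),
      show n + 1 - (n+1-j) = j by omega,
      Polynomial.natDegree_prod _ _
        (fun t ht => qIntP_ne_zero (by simp [Finset.mem_Icc] at ht; omega))]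
    apply Finset.sum_congr rfl
    intro t ht
    simp [Finset.mem_Icc] at ht
    exact natDegree_qIntP (by omega)
  · intro k j hk hkn hkj hjn
    obtain ⟨_, hd⟩ := Faux_k_natDegree n k hk hkn (n-k+1-j) (by omega)
    show (Faux n k (n - k + 1 - j)).natDegree = _
    rw [hd, show n-k+1-(n-k+1-j) = j by omega]
end

section
/- For every q ≥ 2 and n ≥ 0, there is a partition of B_q(n) into pairwise disjoint upper Boolean subsets such that, for each l = 0, 1, …, n, exactly (q−2)^l · C(n,l) of the parts are upper Boolean of rank n−l (with 0^0 = 1, so for q = 2 the only parts have rank n). -/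
def rk {n q : ℕ} (a : Fin n → Fin q) : ℕ := (supp a).card

def tle {n q : ℕ} (a b : Fin n → Fin q) : Prop :=
  ∀ i, (a i : ℕ) ≠ 0 → a i = b i

def IsUpperBooleanSubset (q n t : ℕ) (S : Set (Fin n → Fin q)) : Prop :=
  t ≤ n ∧
  {r : ℕ | ∃ a ∈ S, rk a = r} = Set.Icc (n - t) n ∧
  ∃ e : S ≃ Finset (Fin t), ∀ a b : S, tle a.1 b.1 ↔ e a ⊆ e b

open Finset

variable {n q : ℕ}

lemma mem_supp [NeZero q] {a : Fin n → Fin q} {i : Fin n} : i ∈ supp a ↔ a i ≠ 0 := by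
  simp [supp]

lemma mem_compl_supp [NeZero q] {a : Fin n → Fin q} {i : Fin n} :
    i ∈ (supp a)ᶜ ↔ a i = 0 := by
  simp [mem_supp]

lemma tle_iff [NeZero q] {a b : Fin n → Fin q} : tle a b ↔ ∀ i, a i ≠ 0 → a i = b i := by
  simp only [tle, Fin.val_ne_zero_iff]

lemma rk_le (a : Fin n → Fin q) : rk a ≤ n := by
  simpa [rk] using card_le_univ (supp a)

lemma card_compl_supp (a : Fin n → Fin q) : #(supp a)ᶜ = n - rk a := by
  rw [card_compl, Fintype.card_fin, rk]

def OneFree (c : Fin n → Fin (q + 2)) : Prop := ∀ i, c i ≠ 1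

instance : DecidablePred (OneFree : (Fin n → Fin (q + 2)) → Prop) :=
  fun _ => Fintype.decidableForallFintype

def eraseOnes (a : Fin n → Fin (q + 2)) : Fin n → Fin (q + 2) :=
  fun i => if a i = 1 then 0 else a i

def ones (a : Fin n → Fin (q + 2)) : Finset (Fin n) := {i | a i = 1}

def setOnes (c : Fin n → Fin (q + 2)) (U : Finset (Fin n)) : Fin n → Fin (q + 2) :=
  fun i => if i ∈ U then 1 else c i

lemma oneFree_eraseOnes (a : Fin n → Fin (q + 2)) : OneFree (eraseOnes a) := by
  intro i
  unfold eraseOnes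
  split_ifs with h <;> simp [h]

lemma supp_setOnes (c : Fin n → Fin (q + 2)) (U : Finset (Fin n)) :
    supp (setOnes c U) = supp c ∪ U := by
  ext i
  by_cases hi : i ∈ U <;> simp [mem_supp, setOnes, hi]

lemma rk_setOnes {c : Fin n → Fin (q + 2)} {U : Finset (Fin n)} (hU : U ⊆ (supp c)ᶜ) :
    rk (setOnes c U) = rk c + #U := by
  rw [rk, supp_setOnes, card_union_of_disjoint (subset_compl_iff_disjoint_left.1 hU), rk]

lemma tle_setOnes_iff {c : Fin n → Fin (q + 2)} {U V : Finset (Fin n)} (hU : U ⊆ (supp c)ᶜ)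
    (hV : V ⊆ (supp c)ᶜ) : tle (setOnes c U) (setOnes c V) ↔ U ⊆ V := by
  simp only [tle_iff, setOnes]
  constructor
  · intro h i hiU
    by_contra hiV
    simpa [hiU, hiV, mem_compl_supp.1 (hU hiU)] using h i
  · intro hUV i
    by_cases hiU : i ∈ U
    · simp [hiU, hUV hiU]
    · simp only [hiU, if_false]
      intro hci
      have hiV : i ∉ V := fun hiV => hci (mem_compl_supp.1 (hV hiV))
      simp [hiV]

lemma eraseOnes_setOnes {c : Fin n → Fin (q + 2)} (hc : OneFree c) {U : Finset (Fin n)}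
    (hU : U ⊆ (supp c)ᶜ) : eraseOnes (setOnes c U) = c := by
  funext i
  by_cases hi : i ∈ U
  · simp [eraseOnes, setOnes, hi, mem_compl_supp.1 (hU hi)]
  · simp [eraseOnes, setOnes, hi, hc i]

lemma setOnes_eraseOnes (a : Fin n → Fin (q + 2)) : setOnes (eraseOnes a) (ones a) = a := by
  funext i
  by_cases hi : a i = 1 <;> simp [setOnes, eraseOnes, ones, hi]

lemma ones_subset_compl_supp_eraseOnes (a : Fin n → Fin (q + 2)) :
    ones a ⊆ (supp (eraseOnes a))ᶜ := by
  intro i hi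
  rw [mem_compl_supp]
  simp_all [ones, eraseOnes]

lemma preimage_eraseOnes_singleton {c : Fin n → Fin (q + 2)} (hc : OneFree c) :
    eraseOnes ⁻¹' {c} = setOnes c '' {U | U ⊆ (supp c)ᶜ} := by
  ext a
  constructor
  · rintro rfl
    exact ⟨ones a, ones_subset_compl_supp_eraseOnes a, setOnes_eraseOnes a⟩
  · rintro ⟨U, hU, rfl⟩
    exact eraseOnes_setOnes hc hU

lemma isUpperBooleanSubset_range {t : ℕ} (ht : t ≤ n) (F : Finset (Fin t) → Fin n → Fin q)
    (hrk : ∀ T, rk (F T) = n - t + #T) (hF : ∀ T T', tle (F T) (F T') ↔ T ⊆ T') :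
    IsUpperBooleanSubset q n t (Set.range F) := by
  have hinj : F.Injective := fun T T' h => Subset.antisymm
    ((hF T T').1 (h ▸ (hF T' T').2 le_rfl)) ((hF T' T).1 (h ▸ (hF T T).2 le_rfl))
  refine ⟨ht, ?_, (Equiv.ofInjective F hinj).symm, ?_⟩
  · ext r
    simp only [Set.mem_ofPred_eq, Set.exists_range_iff, hrk, Set.mem_Icc]
    constructor
    · rintro ⟨T, rfl⟩
      have := (card_le_univ T).trans_eq (Fintype.card_fin t)
      omega
    · rintro ⟨hr, hrn⟩
      obtain ⟨T, -, hT⟩ := exists_subset_card_eq (s := (univ : Finset (Fin t)))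
        (n := r - (n - t)) (by simp; omega)
      exact ⟨T, by omega⟩
  · rintro ⟨_, T, rfl⟩ ⟨_, T', rfl⟩
    simpa using hF T T'

lemma isUpperBooleanSubset_preimage_eraseOnes {c : Fin n → Fin (q + 2)} (hc : OneFree c) :
    IsUpperBooleanSubset (q + 2) n (n - rk c) (eraseOnes ⁻¹' {c}) := by
  set g := ((supp c)ᶜ.orderEmbOfFin (card_compl_supp c)).toEmbedding
  have hg : univ.map g = (supp c)ᶜ := map_orderEmbOfFin_univ _ _
  have hsub (T : Finset (Fin (n - rk c))) : T.map g ⊆ (supp c)ᶜ :=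
    hg ▸ map_subset_map.2 (subset_univ T)
  have hrange :
      Set.range (fun T : Finset (Fin (n - rk c)) => setOnes c (T.map g)) = eraseOnes ⁻¹' {c} := by
    rw [preimage_eraseOnes_singleton hc, ← hg]
    ext a
    simp [subset_map_iff, eq_comm]
  rw [← hrange]
  refine isUpperBooleanSubset_range (Nat.sub_le _ _) _ (fun T => ?_) (fun T T' => ?_)
  · rw [rk_setOnes (hsub T), card_map, Nat.sub_sub_self (rk_le c)]
  · rw [tle_setOnes_iff (hsub T) (hsub T'), map_subset_map]

lemma card_oneFree_supp_eq (s : Finset (Fin n)) :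
    #{c : Fin n → Fin (q + 2) | OneFree c ∧ supp c = s} = q ^ #s := by
  have hpi : ({c | OneFree c ∧ supp c = s} : Finset (Fin n → Fin (q + 2))) =
      Fintype.piFinset fun i => if i ∈ s then {0, 1}ᶜ else {0} := by
    ext c
    simp only [OneFree, mem_filter, mem_univ, true_and, Fintype.mem_piFinset, Finset.ext_iff,
      mem_supp]
    have hmem (i : Fin n) (x : Fin (q + 2)) :
        x ∈ (if i ∈ s then {0, 1}ᶜ else {0} : Finset _) ↔ (x ≠ 0 ↔ i ∈ s) ∧ x ≠ 1 := by
      by_cases hi : i ∈ s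
      · simp [hi]
      · simp only [hi, if_false, mem_singleton, iff_false, ne_eq, not_not]
        exact ⟨fun h => ⟨h, h ▸ zero_ne_one⟩, And.left⟩
    simp only [hmem]
    grind
  rw [hpi, Fintype.card_piFinset]
  simp [apply_ite card, prod_ite_mem, card_compl]

lemma card_oneFree_rk_eq (l : ℕ) :
    #{c : Fin n → Fin (q + 2) | OneFree c ∧ rk c = l} = n.choose l * q ^ l := by
  rw [card_eq_sum_card_fiberwise (f := supp) (t := powersetCard l univ)
    (fun c hc => by simpa [rk] using (mem_filter.1 hc).2.2)]
  calc ∑ s ∈ powersetCard l univ, #{c ∈ {c | OneFree c ∧ rk c = l} | supp c = s}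
      = ∑ s ∈ powersetCard l univ, q ^ l := sum_congr rfl fun s hs => by
        rw [filter_filter, ← (mem_powersetCard.1 hs).2, ← card_oneFree_supp_eq]
        congr 1
        ext c
        simp only [mem_filter, mem_univ, true_and, rk]
        grind
    _ = n.choose l * q ^ l := by simp

/-- `B_q(n)` can be partitioned into pairwise disjoint upper Boolean subsets, with exactly
`(q-2)^l · C(n,l)` of them of rank `n-l`, for each `l = 0, 1, …, n`. -/
theorem partition_into_upper_boolean_subsets (q n : ℕ) (hq : 2 ≤ q) :
    ∃ (ι : Type) (_ : Fintype ι) (P : ι → Set (Fin n → Fin q)) (t : ι → ℕ),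
      Pairwise (Function.onFun Disjoint P) ∧
      (⋃ c, P c) = Set.univ ∧
      (∀ c, IsUpperBooleanSubset q n (t c) (P c)) ∧
      (∀ l : ℕ, l ≤ n →
        Nat.card {c : ι // t c = n - l} = (q - 2) ^ l * n.choose l) := by
  obtain ⟨q, rfl⟩ := Nat.exists_eq_add_of_le' hq
  refine ⟨{c : Fin n → Fin (q + 2) // OneFree c}, inferInstance, fun c => eraseOnes ⁻¹' {c.1},
    fun c => n - rk c.1, fun c c' h => ?_, ?_,
    fun c => isUpperBooleanSubset_preimage_eraseOnes c.2, fun l _ => ?_⟩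
  · exact Disjoint.preimage _ (Set.disjoint_singleton.2 (Subtype.val_injective.ne h))
  · exact Set.eq_univ_of_forall fun a =>
      Set.mem_iUnion.2 ⟨⟨eraseOnes a, oneFree_eraseOnes a⟩, rfl⟩
  · have e : {c : {c : Fin n → Fin (q + 2) // OneFree c} // n - rk c.1 = n - l} ≃
        {c : Fin n → Fin (q + 2) // OneFree c ∧ rk c = l} :=
      (Equiv.subtypeEquivRight fun c => by have := rk_le c.1; omega).trans
        (Equiv.subtypeSubtypeEquivSubtypeInter OneFree (rk · = l))
    rw [Nat.card_congr e, Nat.card_eq_fintype_card, Fintype.card_subtype, card_oneFree_rk_eq,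
      Nat.add_sub_cancel, mul_comm]
end

section
/- Let q be a prime power and n ≥ 0. On V(B_{F_q}(n)), the up operator U and the down operator D satisfy the commutation relation UD − DU = H, where H is the linear operator defined on basis elements by H(X) = ( [k]_q − [n−k]_q )·X for every subspace X of dimension k. -/
/-- The `q`-integer `[m]_q = 1 + q + ⋯ + q^{m-1}`. -/
def qInt (q m : ℕ) : ℕ := ∑ i ∈ Finset.range m, q ^ i

noncomputable instance fintypeSubmodule (F : Type) [Field F] [Fintype F] (n : ℕ) :
    Fintype (Submodule F (Fin n → F)) :=
  have : Finite (Submodule F (Fin n → F)) :=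
    Finite.of_injective (fun X => (X : Set (Fin n → F))) SetLike.coe_injective
  Fintype.ofFinite _

open scoped Classical in
/-- The up operator `U` on `V(B_{F_q}(n))`: `(U f)(Y) = Σ_{X ⋖ Y} f X`, the sum being
over subspaces `X ⊆ Y` with `dim X + 1 = dim Y`. -/
noncomputable def upS (F : Type) [Field F] [Fintype F] (n : ℕ)
    (f : Submodule F (Fin n → F) → ℂ) : Submodule F (Fin n → F) → ℂ :=
  fun Y => ∑ X ∈ Finset.univ.filter
    (fun X : Submodule F (Fin n → F) => X ≤ Y ∧ Module.finrank F X + 1 = Module.finrank F Y),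
    f X

open scoped Classical in
/-- The down operator `D` on `V(B_{F_q}(n))`: `(D f)(X) = Σ_{Y covers X} f Y`, the sum being
over subspaces `Y ⊇ X` with `dim Y = dim X + 1`. -/
noncomputable def downS (F : Type) [Field F] [Fintype F] (n : ℕ)
    (f : Submodule F (Fin n → F) → ℂ) : Submodule F (Fin n → F) → ℂ :=
  fun X => ∑ Y ∈ Finset.univ.filter
    (fun Y : Submodule F (Fin n → F) => X ≤ Y ∧ Module.finrank F X + 1 = Module.finrank F Y),
    f Y

section Aux
open Module Submodule
private lemma qInt_mul_pred (q m : ℕ) (hq : 1 ≤ q) : qInt q m * (q - 1) + 1 = q ^ m := by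
  induction m with
  | zero => simp [qInt]
  | succ m ih =>
    have : qInt q (m+1) = qInt q m + q ^ m := Finset.sum_range_succ _ _
    rw [this, add_mul, pow_succ]
    have h1 : q ^ m * (q - 1) = q ^ m * q - q ^ m := by
      rw [Nat.mul_sub, mul_one]
    have h2 : q ^ m ≤ q ^ m * q := Nat.le_mul_of_pos_right _ (by omega)
    omega

variable (F : Type) [Field F] [Fintype F]

private lemma lines_card (M : Type) [AddCommGroup M] [Module F M] [FiniteDimensional F M] :
    Nat.card {L : Submodule F M // finrank F L = 1}
      = qInt (Fintype.card F) (finrank F M) := by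
  classical
  have : Finite M := Module.finite_of_finite F
  letI : Fintype M := Fintype.ofFinite M
  letI : Fintype (Submodule F M) := Fintype.ofFinite _
  set q := Fintype.card F with hq
  have hq2 : 2 ≤ q := Fintype.one_lt_card
  set lines : Finset (Submodule F M) :=
    Finset.univ.filter (fun L : Submodule F M => finrank F L = 1) with hlines
  have key : (Finset.univ.filter (fun v : M => v ≠ 0)).card = lines.card * (q - 1) := by
    have H : ∀ v ∈ Finset.univ.filter (fun v : M => v ≠ 0),
        (fun v : M => Submodule.span F {v}) v ∈ lines := by
      intro v hv
      simp only [hlines, Finset.mem_filter, Finset.mem_univ, true_and] at hv ⊢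
      exact finrank_span_singleton hv
    rw [Finset.card_eq_sum_card_fiberwise H]
    rw [Finset.sum_congr rfl (fun L hL => ?_), Finset.sum_const, smul_eq_mul]
    simp only [hlines, Finset.mem_filter, Finset.mem_univ, true_and] at hL
    have hfib : (Finset.univ.filter (fun v : M => v ≠ 0)).filter
        (fun v => Submodule.span F {v} = L) = (Finset.univ.filter (fun v : M => v ∈ L)).erase 0 := by
      ext v
      simp only [Finset.mem_filter, Finset.mem_erase, Finset.mem_univ, true_and]
      constructor
      · rintro ⟨hv0, hsp⟩; exact ⟨hv0, hsp ▸ Submodule.mem_span_singleton_self v⟩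
      · rintro ⟨hv0, hvL⟩
        refine ⟨hv0, Submodule.eq_of_le_of_finrank_le ((Submodule.span_singleton_le_iff_mem v L).mpr hvL) ?_⟩
        rw [hL, finrank_span_singleton hv0]
    rw [hfib, Finset.card_erase_of_mem (by simp), ← Fintype.card_subtype]
    have : Fintype.card {v : M // v ∈ L} = q ^ finrank F L := card_eq_pow_finrank
    rw [this, hL, pow_one]
  have hv : (Finset.univ.filter (fun v : M => v ≠ 0)).card = q ^ finrank F M - 1 := by
    rw [Finset.filter_ne', Finset.card_erase_of_mem (Finset.mem_univ _), Finset.card_univ]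
    congr 1
    exact card_eq_pow_finrank
  have hcard : Nat.card {L : Submodule F M // finrank F L = 1} = lines.card := by
    rw [Nat.card_eq_fintype_card, Fintype.card_subtype]
  rw [hcard]
  have h1 : lines.card * (q - 1) + 1 = q ^ finrank F M := by
    have : 1 ≤ q ^ finrank F M := Nat.one_le_pow _ _ (by omega)
    omega
  have h2 := qInt_mul_pred q (finrank F M) (by omega)
  have := h1.trans h2.symm
  have := Nat.eq_of_mul_eq_mul_right (show 0 < q - 1 by omega) (by omega : lines.card * (q-1) = qInt q (finrank F M) * (q-1))
  exact this

private lemma hyperplanes_card (M : Type) [AddCommGroup M] [Module F M] [FiniteDimensional F M] :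
    Nat.card {Z : Submodule F M // finrank F Z + 1 = finrank F M}
      = qInt (Fintype.card F) (finrank F M) := by
  classical
  have e : {Z : Submodule F M // finrank F Z + 1 = finrank F M}
      ≃ {L : Submodule F (Module.Dual F M) // finrank F L = 1} := by
    refine ⟨fun Z => ⟨Z.1.dualAnnihilator, ?_⟩, fun L => ⟨L.1.dualCoannihilator, ?_⟩, ?_, ?_⟩
    · have h1 : finrank F (M ⧸ Z.1) = finrank F Z.1.dualAnnihilator :=
        LinearEquiv.finrank_eq (Subspace.quotEquivAnnihilator Z.1)
      have h2 := Submodule.finrank_quotient_add_finrank Z.1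
      have := Z.2
      omega
    · have h1 := Subspace.finrank_add_finrank_dualCoannihilator_eq L.1
      have := L.2
      omega
    · intro Z
      exact Subtype.ext Subspace.dualAnnihilator_dualCoannihilator_eq
    · intro L
      exact Subtype.ext Subspace.dualCoannihilator_dualAnnihilator_eq
  rw [Nat.card_congr e, lines_card, Subspace.dual_finrank_eq]

variable {V : Type} [AddCommGroup V] [Module F V] [FiniteDimensional F V]

private lemma finrank_map_mkQ {X W : Submodule F V} (h : X ≤ W) :
    finrank F (W.map X.mkQ) + finrank F X = finrank F W := by
  have h1 := LinearMap.finrank_range_add_finrank_ker (X.mkQ.comp W.subtype)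
  rw [LinearMap.range_comp, Submodule.range_subtype, LinearMap.ker_comp, Submodule.ker_mkQ] at h1
  rwa [LinearEquiv.finrank_eq (Submodule.comapSubtypeEquivOfLe h)] at h1

private lemma covers_above_card (X : Submodule F V) :
    Nat.card {W : Submodule F V // X ≤ W ∧ finrank F X + 1 = finrank F W}
      = qInt (Fintype.card F) (finrank F V - finrank F X) := by
  classical
  have hrange : ∀ L : Submodule F (V ⧸ X), L ≤ LinearMap.range X.mkQ := by
    intro L; rw [Submodule.range_mkQ]; exact le_top
  have e : {W : Submodule F V // X ≤ W ∧ finrank F X + 1 = finrank F W}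
      ≃ {L : Submodule F (V ⧸ X) // finrank F L = 1} := by
    refine ⟨fun W => ⟨W.1.map X.mkQ, ?_⟩,
      fun L => ⟨Submodule.comap X.mkQ L.1, ?_, ?_⟩, ?_, ?_⟩
    · have h1 := finrank_map_mkQ F W.2.1
      have := W.2.2
      omega
    · intro x hx
      simp only [Submodule.mem_comap, Submodule.mkQ_apply]
      rw [(Submodule.Quotient.mk_eq_zero X).mpr hx]
      exact L.1.zero_mem
    · have hle : X ≤ Submodule.comap X.mkQ L.1 := by
        intro x hx
        simp only [Submodule.mem_comap, Submodule.mkQ_apply]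
        rw [(Submodule.Quotient.mk_eq_zero X).mpr hx]
        exact L.1.zero_mem
      have h1 := finrank_map_mkQ F hle
      rw [Submodule.map_comap_eq_self (hrange L.1)] at h1
      have := L.2
      omega
    · intro W
      refine Subtype.ext ?_
      show Submodule.comap X.mkQ (Submodule.map X.mkQ W.1) = W.1
      rw [Submodule.comap_map_eq, Submodule.ker_mkQ]
      exact sup_eq_left.mpr W.2.1
    · intro L
      exact Subtype.ext (Submodule.map_comap_eq_self (hrange L.1))
  rw [Nat.card_congr e, lines_card]
  congr 1
  have := Submodule.finrank_quotient_add_finrank X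
  omega

private lemma covers_below_card (X : Submodule F V) :
    Nat.card {Z : Submodule F V // Z ≤ X ∧ finrank F Z + 1 = finrank F X}
      = qInt (Fintype.card F) (finrank F X) := by
  classical
  have e : {Z : Submodule F V // Z ≤ X ∧ finrank F Z + 1 = finrank F X}
      ≃ {Z' : Submodule F ↥X // finrank F Z' + 1 = finrank F ↥X} := by
    refine ⟨fun Z => ⟨Z.1.comap X.subtype, ?_⟩,
      fun Z' => ⟨Z'.1.map X.subtype, Submodule.map_subtype_le _ _, ?_⟩, ?_, ?_⟩
    · rw [LinearEquiv.finrank_eq (Submodule.comapSubtypeEquivOfLe Z.2.1)]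
      exact Z.2.2
    · rw [← LinearEquiv.finrank_eq (Submodule.equivMapOfInjective X.subtype
        X.injective_subtype Z'.1)]
      exact Z'.2
    · intro Z
      refine Subtype.ext ?_
      show Submodule.map X.subtype (Submodule.comap X.subtype Z.1) = Z.1
      rw [Submodule.map_comap_subtype]
      exact inf_eq_right.mpr Z.2.1
    · intro Z'
      exact Subtype.ext (Submodule.comap_map_eq_of_injective X.injective_subtype Z'.1)
  rw [Nat.card_congr e, hyperplanes_card]

private lemma sum_filter_helper {α : Type*} [Fintype α] (g : α → ℂ) (p : α → Prop) (c : α → α → Prop)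
    [DecidablePred p] [∀ Z, DecidablePred (c Z)] :
    ∑ Z ∈ Finset.univ.filter p, ∑ Y ∈ Finset.univ.filter (c Z), g Y
      = ∑ Y : α, ((Finset.univ.filter (fun Z => p Z ∧ c Z Y)).card : ℂ) * g Y := by
  classical
  calc ∑ Z ∈ Finset.univ.filter p, ∑ Y ∈ Finset.univ.filter (c Z), g Y
      = ∑ Z : α, ∑ Y : α, if p Z ∧ c Z Y then g Y else 0 := by
        rw [Finset.sum_filter]
        refine Finset.sum_congr rfl fun Z _ => ?_
        by_cases h : p Z <;> simp [h, Finset.sum_filter]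
    _ = ∑ Y : α, ∑ Z : α, if p Z ∧ c Z Y then g Y else 0 := Finset.sum_comm
    _ = ∑ Y : α, ((Finset.univ.filter (fun Z => p Z ∧ c Z Y)).card : ℂ) * g Y := by
        refine Finset.sum_congr rfl fun Y _ => ?_
        rw [← Finset.sum_filter, Finset.sum_const, nsmul_eq_mul]

private lemma filter_card_eq_nat_card {α : Type*} [Fintype α] (p : α → Prop) [DecidablePred p] :
    (Finset.univ.filter p).card = Nat.card {x // p x} := by
  rw [Nat.card_eq_fintype_card, Fintype.card_subtype]

open scoped Classical in
private lemma offdiag_card_eq [Fintype (Submodule F V)] (X Y : Submodule F V) (hne : Y ≠ X) :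
    (Finset.univ.filter (fun Z : Submodule F V =>
        (Z ≤ X ∧ finrank F Z + 1 = finrank F X) ∧ (Z ≤ Y ∧ finrank F Z + 1 = finrank F Y))).card
      = (Finset.univ.filter (fun W : Submodule F V =>
        (X ≤ W ∧ finrank F X + 1 = finrank F W) ∧ (Y ≤ W ∧ finrank F Y + 1 = finrank F W))).card := by
  by_cases hk : finrank F Y = finrank F X
  · -- equal rank case
    have hinf_lt : finrank F (X ⊓ Y : Submodule F V) < finrank F X := by
      rcases lt_or_eq_of_le (Submodule.finrank_mono (inf_le_left : X ⊓ Y ≤ X)) with h | h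
      · exact h
      · exfalso
        have h1 : X ⊓ Y = X := Submodule.eq_of_le_of_finrank_le inf_le_left h.ge
        have h2 : X ≤ Y := by rw [← h1]; exact inf_le_right
        exact hne (Submodule.eq_of_le_of_finrank_le h2 hk.le).symm
    have hsup_gt : finrank F X < finrank F (X ⊔ Y : Submodule F V) := by
      rcases lt_or_eq_of_le (Submodule.finrank_mono (le_sup_left : X ≤ X ⊔ Y)) with h | h
      · exact h
      · exfalso
        have h1 : X = X ⊔ Y := Submodule.eq_of_le_of_finrank_le le_sup_left h.ge
        have h2 : Y ≤ X := by rw [h1]; exact le_sup_right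
        exact hne (Submodule.eq_of_le_of_finrank_le h2 hk.ge)
    have hsum : finrank F (X ⊔ Y : Submodule F V) + finrank F (X ⊓ Y : Submodule F V)
        = finrank F X + finrank F Y := Submodule.finrank_sup_add_finrank_inf_eq X Y
    have h1 : (Finset.univ.filter (fun Z : Submodule F V =>
        (Z ≤ X ∧ finrank F Z + 1 = finrank F X) ∧ (Z ≤ Y ∧ finrank F Z + 1 = finrank F Y))).card
        = if finrank F (X ⊓ Y : Submodule F V) + 1 = finrank F X then 1 else 0 := by
      by_cases hP : finrank F (X ⊓ Y : Submodule F V) + 1 = finrank F X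
      · rw [if_pos hP, Finset.card_eq_one]
        refine ⟨X ⊓ Y, ?_⟩
        ext Z
        simp only [Finset.mem_filter, Finset.mem_univ, true_and, Finset.mem_singleton]
        constructor
        · rintro ⟨⟨hZX, hrX⟩, hZY, hrY⟩
          exact Submodule.eq_of_le_of_finrank_le (le_inf hZX hZY) (by omega)
        · rintro rfl
          exact ⟨⟨inf_le_left, hP⟩, inf_le_right, by omega⟩
      · rw [if_neg hP, Finset.card_eq_zero, Finset.filter_eq_empty_iff]
        rintro Z _ ⟨⟨hZX, hrX⟩, hZY, hrY⟩
        have hle : Z ≤ X ⊓ Y := le_inf hZX hZY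
        have := Submodule.finrank_mono hle
        omega
    have h2 : (Finset.univ.filter (fun W : Submodule F V =>
        (X ≤ W ∧ finrank F X + 1 = finrank F W) ∧ (Y ≤ W ∧ finrank F Y + 1 = finrank F W))).card
        = if finrank F (X ⊔ Y : Submodule F V) = finrank F X + 1 then 1 else 0 := by
      by_cases hP : finrank F (X ⊔ Y : Submodule F V) = finrank F X + 1
      · rw [if_pos hP, Finset.card_eq_one]
        refine ⟨X ⊔ Y, ?_⟩
        ext W
        simp only [Finset.mem_filter, Finset.mem_univ, true_and, Finset.mem_singleton]
        constructor
        · rintro ⟨⟨hXW, hrX⟩, hYW, hrY⟩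
          exact (Submodule.eq_of_le_of_finrank_le (sup_le hXW hYW) (by omega)).symm
        · rintro rfl
          exact ⟨⟨le_sup_left, hP.symm⟩, le_sup_right, by omega⟩
      · rw [if_neg hP, Finset.card_eq_zero, Finset.filter_eq_empty_iff]
        rintro W _ ⟨⟨hXW, hrX⟩, hYW, hrY⟩
        have hle : X ⊔ Y ≤ W := sup_le hXW hYW
        have := Submodule.finrank_mono hle
        omega
    have hiff : (finrank F (X ⊓ Y : Submodule F V) + 1 = finrank F X)
        ↔ (finrank F (X ⊔ Y : Submodule F V) = finrank F X + 1) := by omega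
    rw [h1, h2, if_congr hiff rfl rfl]
  · -- different ranks: both empty
    rw [Finset.filter_false_of_mem, Finset.filter_false_of_mem]
    · rintro W _ ⟨⟨_, hrX⟩, _, hrY⟩
      omega
    · rintro Z _ ⟨⟨_, hrX⟩, _, hrY⟩
      omega

end Aux

open Module in
/-- On `V(B_{F_q}(n))` the commutation relation `UD - DU = H` holds, where
`H(X) = ([k]_q - [n-k]_q)·X` for a subspace `X` of dimension `k`. -/
theorem up_down_commutator (q n : ℕ) (hq : IsPrimePow q)
    (F : Type) [Field F] [Fintype F] (hF : Fintype.card F = q) :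
    ∀ (f : Submodule F (Fin n → F) → ℂ) (X : Submodule F (Fin n → F)),
      upS F n (downS F n f) X - downS F n (upS F n f) X =
        ((qInt q (Module.finrank F X) : ℂ) - (qInt q (n - Module.finrank F X) : ℂ)) * f X := by
  classical
  intro f X
  have hVn : finrank F (Fin n → F) = n := Module.finrank_fin_fun F
  simp only [upS, downS]
  rw [sum_filter_helper f
      (fun Z : Submodule F (Fin n → F) => Z ≤ X ∧ finrank F Z + 1 = finrank F X)
      (fun Z Y => Z ≤ Y ∧ finrank F Z + 1 = finrank F Y),
    sum_filter_helper f
      (fun W : Submodule F (Fin n → F) => X ≤ W ∧ finrank F X + 1 = finrank F W)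
      (fun W Y => Y ≤ W ∧ finrank F Y + 1 = finrank F W),
    ← Finset.sum_sub_distrib]
  simp_rw [← sub_mul]
  rw [Finset.sum_eq_single_of_mem X (Finset.mem_univ X)]
  · congr 2
    · -- c₁ X = qInt q k
      have hset : Finset.univ.filter (fun Z : Submodule F (Fin n → F) =>
          (Z ≤ X ∧ finrank F Z + 1 = finrank F X) ∧ (Z ≤ X ∧ finrank F Z + 1 = finrank F X))
          = Finset.univ.filter (fun Z => Z ≤ X ∧ finrank F Z + 1 = finrank F X) :=
        Finset.filter_congr (fun Z _ => by simp [and_self])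
      rw [hset, filter_card_eq_nat_card, covers_below_card, hF]
    · -- c₂ X = qInt q (n - k)
      have hset : Finset.univ.filter (fun W : Submodule F (Fin n → F) =>
          (X ≤ W ∧ finrank F X + 1 = finrank F W) ∧ (X ≤ W ∧ finrank F X + 1 = finrank F W))
          = Finset.univ.filter (fun W => X ≤ W ∧ finrank F X + 1 = finrank F W) :=
        Finset.filter_congr (fun W _ => by simp [and_self])
      rw [hset, filter_card_eq_nat_card, covers_above_card, hF, hVn]
  · intro Y _ hYX
    rw [offdiag_card_eq F X Y hYX, sub_self, zero_mul]
end
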